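/- Let L₀ = Z_p⁴ with the standard symplectic pairing, and let x, y, z, w ∈ L₀ satisfy ⟨x,z⟩ = ⟨y,w⟩ = 1 and ⟨x,y⟩ = ⟨x,w⟩ = ⟨y,z⟩ = ⟨z,w⟩ = 0. Let x', y', z', w' ∈ L₀ with x ≡ x', y ≡ y', z ≡ z', w ≡ w' mod p^m L₀ satisfying the same pairing relations. Then there exists g ∈ GSp₄(Z_p) with g ≡ 1 mod p^m (acting trivially on L₀/p^m L₀) such that g x = x', g y = y', g z = z', g w = w'. -/

import Mathlib

/-!
Put `x, y, z, w` and `x', y', z', w'` as the columns of matrices `M` and `N`. The pairing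
relations say that both have the same Gram matrix `Mᵀ J M = Nᵀ J N = G` with respect to the
matrix `J` of the pairing; since `det G = 1`, `M` is invertible, and `g = N M⁻¹` carries the first
quadruple to the second and satisfies `gᵀ J g = J`. Finally `g - 1 = (N - M) M⁻¹` has all entries
divisible by `p ^ m`, i.e. `g` reduces to the identity modulo `p ^ m`.
-/

/-- The standard symplectic pairing on `L₀ = ℤ_p⁴` (0-indexed). -/
noncomputable def sp4 (p : ℕ) [Fact p.Prime] (x y : Fin 4 → ℤ_[p]) : ℤ_[p] :=
  x 0 * y 3 + x 1 * y 2 - x 2 * y 1 - x 3 * y 0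

open Matrix

namespace Matrix

variable {R n : Type*} [CommRing R]

theorem map_mk_span_singleton_eq_iff {m : Type*} {d : R} {A B : Matrix m n R} :
    A.map (Ideal.Quotient.mk (Ideal.span {d})) = B.map (Ideal.Quotient.mk (Ideal.span {d})) ↔
      ∀ i j, d ∣ A i j - B i j := by
  simp only [← Matrix.ext_iff, map_apply, Ideal.Quotient.mk_eq_mk_iff_sub_mem,
    Ideal.mem_span_singleton]

variable [Fintype n]

theorem mulVec_dotProduct_mulVec_mulVec (A J : Matrix n n R) (u v : n → R) :
    A *ᵥ u ⬝ᵥ J *ᵥ (A *ᵥ v) = u ⬝ᵥ (Aᵀ * J * A) *ᵥ v := by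
  rw [mulVec_mulVec, dotProduct_mulVec, vecMul_mulVec, ← dotProduct_mulVec, Matrix.mul_assoc]

variable [DecidableEq n]

theorem mul_nonsing_inv_mulVec_col {M : Matrix n n R} (hM : IsUnit M.det) (N : Matrix n n R)
    (j : n) : (N * M⁻¹) *ᵥ M.col j = N.col j := by
  rw [← mulVec_single_one, mulVec_mulVec, Matrix.mul_assoc, nonsing_inv_mul _ hM, Matrix.mul_one,
    mulVec_single_one]

theorem transpose_mul_mul_eq_of_gram_eq {M : Matrix n n R} (hM : IsUnit M.det) {J N : Matrix n n R}
    (h : Mᵀ * J * M = Nᵀ * J * N) : (N * M⁻¹)ᵀ * J * (N * M⁻¹) = J :=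
  calc (N * M⁻¹)ᵀ * J * (N * M⁻¹) = M⁻¹ᵀ * (Nᵀ * J * N) * M⁻¹ := by
        simp only [transpose_mul, Matrix.mul_assoc]
    _ = (M * M⁻¹)ᵀ * J * (M * M⁻¹) := by
        simp only [← h, transpose_mul, Matrix.mul_assoc]
    _ = J := by simp [mul_nonsing_inv _ hM]

theorem map_mul_nonsing_inv_eq_one {S : Type*} [CommRing S] (f : R →+* S)
    {M N : Matrix n n R} (hM : IsUnit M.det) (h : M.map f = N.map f) :
    (N * M⁻¹).map f = 1 := by
  rw [Matrix.map_mul, ← h, ← Matrix.map_mul, mul_nonsing_inv _ hM]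
  simp

theorem dvd_mulVec_sub_self {d : R} {A : Matrix n n R}
    (hA : A.map (Ideal.Quotient.mk (Ideal.span {d})) = 1) (v : n → R) (i : n) :
    d ∣ (A *ᵥ v) i - v i := by
  rw [← Ideal.mem_span_singleton, ← Ideal.Quotient.mk_eq_mk_iff_sub_mem, RingHom.map_mulVec, hA,
    one_mulVec]
  rfl

end Matrix

def sympJ (R : Type*) [CommRing R] : Matrix (Fin 4) (Fin 4) R :=
  !![0, 0, 0, 1; 0, 0, 1, 0; 0, -1, 0, 0; -1, 0, 0, 0]

theorem det_sympJ (R : Type*) [CommRing R] : (sympJ R).det = 1 := by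
  simp [sympJ, det_succ_row_zero, Fin.sum_univ_succ, Fin.succAbove, pow_succ]

def sympGram (R : Type*) [CommRing R] : Matrix (Fin 4) (Fin 4) R :=
  !![0, 0, 1, 0; 0, 0, 0, 1; -1, 0, 0, 0; 0, -1, 0, 0]

theorem det_sympGram (R : Type*) [CommRing R] : (sympGram R).det = 1 := by
  simp [sympGram, det_succ_row_zero, Fin.sum_univ_succ, Fin.succAbove]

theorem isUnit_det_of_gram_eq_sympGram {R : Type*} [CommRing R] {M : Matrix (Fin 4) (Fin 4) R}
    (h : Mᵀ * sympJ R * M = sympGram R) : IsUnit M.det := by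
  have hdet := congrArg det h
  rw [det_mul, det_mul, det_transpose, det_sympJ, det_sympGram, mul_one] at hdet
  exact IsUnit.of_mul_eq_one _ hdet

section sp4

variable {p : ℕ} [Fact p.Prime]

theorem sp4_eq_dotProduct_mulVec (u v : Fin 4 → ℤ_[p]) :
    sp4 p u v = u ⬝ᵥ sympJ ℤ_[p] *ᵥ v := by
  simp only [sp4, dotProduct, mulVec, sympJ, of_apply, cons_val', cons_val_fin_one,
    Fin.sum_univ_four, cons_val_zero, cons_val_one, cons_val, Fin.isValue]
  ring

theorem sp4_self (u : Fin 4 → ℤ_[p]) : sp4 p u u = 0 := by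
  unfold sp4; ring

theorem sp4_swap (u v : Fin 4 → ℤ_[p]) : sp4 p v u = -sp4 p u v := by
  unfold sp4; ring

variable {x y z w : Fin 4 → ℤ_[p]}

theorem of_mul_sympJ_mul_transpose_eq_sympGram (hxz : sp4 p x z = 1) (hyw : sp4 p y w = 1)
    (hxy : sp4 p x y = 0) (hxw : sp4 p x w = 0) (hyz : sp4 p y z = 0) (hzw : sp4 p z w = 0) :
    of ![x, y, z, w] * sympJ ℤ_[p] * (of ![x, y, z, w])ᵀ = sympGram ℤ_[p] := by
  ext i j
  rw [mul_mul_apply, transpose_transpose, ← sp4_eq_dotProduct_mulVec]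
  change sp4 p (![x, y, z, w] i) (![x, y, z, w] j) = _
  fin_cases i <;> fin_cases j <;>
    simp [sympGram, sp4_self, sp4_swap x y, sp4_swap x z, sp4_swap x w, sp4_swap y z,
      sp4_swap y w, sp4_swap z w, *]

end sp4

theorem exists_symplectic_automorphism_congruent_one
    (p : ℕ) [Fact p.Prime] (m : ℕ)
    (x y z w x' y' z' w' : Fin 4 → ℤ_[p])
    (hxz : sp4 p x z = 1) (hyw : sp4 p y w = 1)
    (hxy : sp4 p x y = 0) (hxw : sp4 p x w = 0) (hyz : sp4 p y z = 0) (hzw : sp4 p z w = 0)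
    (hxz' : sp4 p x' z' = 1) (hyw' : sp4 p y' w' = 1)
    (hxy' : sp4 p x' y' = 0) (hxw' : sp4 p x' w' = 0) (hyz' : sp4 p y' z' = 0)
    (hzw' : sp4 p z' w' = 0)
    (hx : ∀ i, (p : ℤ_[p]) ^ m ∣ (x i - x' i))
    (hy : ∀ i, (p : ℤ_[p]) ^ m ∣ (y i - y' i))
    (hz : ∀ i, (p : ℤ_[p]) ^ m ∣ (z i - z' i))
    (hw : ∀ i, (p : ℤ_[p]) ^ m ∣ (w i - w' i)) :
    ∃ g : (Fin 4 → ℤ_[p]) ≃ₗ[ℤ_[p]] (Fin 4 → ℤ_[p]),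
      (∃ c : ℤ_[p]ˣ, ∀ u v : Fin 4 → ℤ_[p], sp4 p (g u) (g v) = (c : ℤ_[p]) * sp4 p u v) ∧
      (∀ (v : Fin 4 → ℤ_[p]) (i : Fin 4), (p : ℤ_[p]) ^ m ∣ (g v i - v i)) ∧
      g x = x' ∧ g y = y' ∧ g z = z' ∧ g w = w' := by
  set M : Matrix (Fin 4) (Fin 4) ℤ_[p] := (of ![x, y, z, w])ᵀ
  set N : Matrix (Fin 4) (Fin 4) ℤ_[p] := (of ![x', y', z', w'])ᵀ
  have hgramM : Mᵀ * sympJ ℤ_[p] * M = sympGram ℤ_[p] := by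
    simpa only [M, transpose_transpose] using
      of_mul_sympJ_mul_transpose_eq_sympGram hxz hyw hxy hxw hyz hzw
  have hgramN : Nᵀ * sympJ ℤ_[p] * N = sympGram ℤ_[p] := by
    simpa only [N, transpose_transpose] using
      of_mul_sympJ_mul_transpose_eq_sympGram hxz' hyw' hxy' hxw' hyz' hzw'
  have hM := isUnit_det_of_gram_eq_sympGram hgramM
  have hg : IsUnit (N * M⁻¹).det := by
    rw [det_mul]
    exact (isUnit_det_of_gram_eq_sympGram hgramN).mul (isUnit_nonsing_inv_det _ hM)
  have hMN : ∀ i j, (p : ℤ_[p]) ^ m ∣ M i j - N i j := by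
    intro i j
    fin_cases j <;> simp [M, N, hx, hy, hz, hw]
  have hg_one := map_mul_nonsing_inv_eq_one _ hM (map_mk_span_singleton_eq_iff.2 hMN)
  refine ⟨(N * M⁻¹).toLinearEquiv' (invertibleOfIsUnitDet _ hg), ⟨1, fun u v => ?_⟩,
    dvd_mulVec_sub_self hg_one, mul_nonsing_inv_mulVec_col hM N 0,
    mul_nonsing_inv_mulVec_col hM N 1, mul_nonsing_inv_mulVec_col hM N 2,
    mul_nonsing_inv_mulVec_col hM N 3⟩
  have hsymp := transpose_mul_mul_eq_of_gram_eq hM (hgramM.trans hgramN.symm)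
  rw [sp4_eq_dotProduct_mulVec, sp4_eq_dotProduct_mulVec, Units.val_one, one_mul]
  exact (mulVec_dotProduct_mulVec_mulVec (N * M⁻¹) _ u v).trans (by rw [hsymp])
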